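/- Let G be an undirected edge-weighted graph with spanning tree T, and let e' be a descendant edge of e in T (e' lies in the subtree below e). Then the weight of the cut of G determined by {e,e'} equals w(T_e) + w(T_{e'}) - 2·w(T_{e'}, V \ T_e), where w(T_{e'}, V \ T_e) is the total weight of graph edges with one endpoint in T_{e'} and the other outside T_e. -/

import Mathlib

open Finset

/-- Total weight of graph edges with one endpoint in `A` and the other in `B`
(summed over ordered pairs). -/
def betw {V : Type*} [Fintype V] (w : V → V → ℝ) (A B : Finset V) : ℝ :=
  ∑ u ∈ A, ∑ v ∈ B, w u v

/-- Weight of the cut `(S, V \\ S)`: total weight of edges leaving `S`. -/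
def cutw {V : Type*} [Fintype V] [DecidableEq V] (w : V → V → ℝ) (S : Finset V) : ℝ :=
  betw w S Sᶜ

/-
Split `Te` into `A = Te \ Te'` and `Te'`, and write `C = V \ Te`. Then
`cut(A) = w(A,C) + w(A,Te')`, `cut(Te) = w(A,C) + w(Te',C)` and `cut(Te') = w(Te',A) + w(Te',C)`;
by symmetry `w(A,Te') = w(Te',A)`, and the identity is linear arithmetic.
-/

section Betw

variable {V : Type*} [Fintype V] (w : V → V → ℝ)

theorem betw_union_left [DecidableEq V] {A B : Finset V} (h : Disjoint A B) (C : Finset V) :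
    betw w (A ∪ B) C = betw w A C + betw w B C :=
  sum_union h

theorem betw_union_right [DecidableEq V] (A : Finset V) {B C : Finset V} (h : Disjoint B C) :
    betw w A (B ∪ C) = betw w A B + betw w A C := by
  simp only [betw, sum_union h, sum_add_distrib]

theorem betw_comm {w : V → V → ℝ} (hsym : ∀ u v, w u v = w v u) (A B : Finset V) :
    betw w A B = betw w B A := by
  rw [betw, betw, sum_comm]
  simp only [hsym]

end Betw

theorem compl_eq_sdiff_union_compl_of_subset {V : Type*} [Fintype V] [DecidableEq V]
    {S T : Finset V} (h : T ⊆ S) : Tᶜ = (S \ T) ∪ Sᶜ := by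
  ext x
  simp only [mem_compl, mem_sdiff, mem_union]
  have := @h x
  tauto

theorem stmt_1_general {V : Type*} [Fintype V] [DecidableEq V] (w : V → V → ℝ)
    (hsym : ∀ u v, w u v = w v u)
    (Te Te' : Finset V) (hsub : Te' ⊆ Te) :
    cutw w (Te \ Te') = cutw w Te + cutw w Te' - 2 * betw w Te' Teᶜ := by
  have hcut_sdiff : cutw w (Te \ Te') = betw w (Te \ Te') Teᶜ + betw w (Te \ Te') Te' := by
    rw [cutw, compl_sdiff, Finset.himp_def,
      betw_union_right w _ (disjoint_compl_right_iff.mpr hsub), add_comm]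
  have hcut_outer : cutw w Te = betw w (Te \ Te') Teᶜ + betw w Te' Teᶜ := by
    rw [cutw]
    nth_rewrite 1 [← sdiff_union_of_subset hsub]
    exact betw_union_left w sdiff_disjoint _
  have hcut_inner : cutw w Te' = betw w Te' (Te \ Te') + betw w Te' Teᶜ := by
    rw [cutw, compl_eq_sdiff_union_compl_of_subset hsub,
      betw_union_right w _ (disjoint_compl_right_iff.mpr sdiff_subset)]
  have := betw_comm hsym (Te \ Te') Te'
  linarith

/-- If `e'` is a descendant tree edge of `e`, so that the subtrees satisfy
`Te' ⊆ Te`, then the weight of the cut determined by {e,e'}, i.e. the cut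
`(Te \ Te', V \ (Te \ Te'))`, equals `w(Te) + w(Te') - 2 w(Te', V \ Te)`. -/
theorem stmt_1 {V : Type*} [Fintype V] [DecidableEq V] (w : V → V → ℝ)
    (hsym : ∀ u v, w u v = w v u) (hnn : ∀ u v, 0 ≤ w u v)
    (Te Te' : Finset V) (hsub : Te' ⊆ Te) :
    cutw w (Te \ Te') = cutw w Te + cutw w Te' - 2 * betw w Te' Teᶜ :=
  stmt_1_general w hsym Te Te' hsub
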